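/- arXiv:2403.06079 — 3 statements merged into one kernel-verified Lean document; each statement's English description precedes it below -/
import Mathlib

section
/- For probability measures μ and ν on a measurable space, TV(μ, ν) ≤ sqrt((1/2) · D_KL(μ‖ν)). -/
open MeasureTheory ENNReal
open scoped Classical

/-- Total variation distance: `sup_A (μ(A) - ν(A))` over measurable sets. -/
noncomputable def tvDist {X : Type*} [MeasurableSpace X] (μ ν : Measure X) : ℝ≥0∞ :=
  ⨆ (A : Set X) (_ : MeasurableSet A), μ A - ν A

/-- 1-Wasserstein distance: infimum over couplings of the expected distance. -/
noncomputable def W1 {X : Type*} [MeasurableSpace X] [PseudoEMetricSpace X]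
    (μ ν : Measure X) : ℝ≥0∞ :=
  ⨅ (π : Measure (X × X)) (_ : π.map Prod.fst = μ ∧ π.map Prod.snd = ν),
    ∫⁻ p, edist p.1 p.2 ∂π

/-- Kullback–Leibler divergence: `∫ log (dμ/dν) dμ` if `μ ≪ ν` (and the
log-likelihood ratio is integrable), `∞` otherwise. -/
noncomputable def klDiv {X : Type*} [MeasurableSpace X] (μ ν : Measure X) : ℝ≥0∞ :=
  if μ ≪ ν ∧ Integrable (fun x => Real.log ((μ.rnDeriv ν x).toReal)) μ
  then ENNReal.ofReal (∫ x, Real.log ((μ.rnDeriv ν x).toReal) ∂μ)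
  else ⊤

/-- `exp(-D)` for an extended-nonnegative-real `D`, with `exp(-∞) = 0`. -/
noncomputable def expNeg (D : ℝ≥0∞) : ℝ≥0∞ :=
  if D = ⊤ then 0 else ENNReal.ofReal (Real.exp (-D.toReal))

/-! For `x ≥ 0` one has `3 (x - 1)² ≤ 2 (x + 2) (x log x + 1 - x)`, so by AM-GM
`|x - 1| ≤ t (x + 2) / 3 + (x log x + 1 - x) / (2 t)` for every `t > 0`. Taking `x = dμ/dν` and
integrating against `ν` gives `∫ |dμ/dν - 1| dν ≤ t + KL(μ‖ν) / (2 t)`, while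
`2 (μ A - ν A) ≤ ∫ |dμ/dν - 1| dν`. The choice `t = μ A - ν A` yields
`(μ A - ν A)² ≤ KL(μ‖ν) / 2`. -/

open Set Real
open InformationTheory (klFun klFun_apply klFun_zero)

lemma sub_one_mul_five_mul_add_one_div_le_log {x : ℝ} (hx : 0 < x) :
    (x - 1) * (5 * x + 1) / (2 * x * (x + 2)) ≤ log x := by
  set g : ℝ → ℝ := fun y ↦ log y - (y - 1) * (5 * y + 1) / (2 * y * (y + 2))
  -- `g' = (y - 1)³ / (y² (y + 2)²)` changes sign only at `1`, where `g` vanishes.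
  have hg : ∀ y, 0 < y → HasDerivAt g ((y - 1) ^ 3 / (y ^ 2 * (y + 2) ^ 2)) y := by
    intro y hy
    have hden : 2 * y * (y + 2) ≠ 0 := by positivity
    have hnum : HasDerivAt (fun y : ℝ ↦ (y - 1) * (5 * y + 1)) (10 * y - 4) y := by
      refine (((hasDerivAt_id' y).sub_const 1).mul
        (((hasDerivAt_id' y).const_mul 5).add_const 1)).congr_deriv ?_
      ring
    have hden' : HasDerivAt (fun y : ℝ ↦ 2 * y * (y + 2)) (4 * y + 4) y := by
      refine (((hasDerivAt_id' y).const_mul 2).mul ((hasDerivAt_id' y).add_const 2)).congr_deriv ?_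
      ring
    refine ((hasDerivAt_log hy.ne').sub (hnum.div hden' hden)).congr_deriv ?_
    field_simp
    ring
  have hdiff : DifferentiableOn ℝ g (Ioi 0) := fun y hy ↦
    (hg y hy).differentiableAt.differentiableWithinAt
  have hmin : IsMinOn g (Ioi 0) 1 := by
    refine isMinOn_Ioi_of_deriv (hg 1 one_pos).continuousAt (hdiff.mono Ioo_subset_Ioi_self)
      (hdiff.mono (Ioi_subset_Ioi zero_le_one)) (fun y hy ↦ ?_) (fun y hy ↦ ?_)
    · rw [(hg y hy.1).deriv]
      exact div_nonpos_of_nonpos_of_nonneg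
        (Odd.pow_nonpos (by decide) (by linarith [hy.2])) (by positivity)
    · have hy : 1 < y := hy
      rw [(hg y (by linarith)).deriv]
      exact div_nonneg (pow_nonneg (by linarith) _) (by positivity)
  simpa [g] using hmin (mem_Ioi.2 hx)

lemma three_mul_sq_sub_one_le_mul_klFun {x : ℝ} (hx : 0 ≤ x) :
    3 * (x - 1) ^ 2 ≤ 2 * (x + 2) * klFun x := by
  rcases hx.eq_or_lt with rfl | hx
  · norm_num [klFun_zero]
  have h := sub_one_mul_five_mul_add_one_div_le_log hx
  rw [div_le_iff₀ (by positivity)] at h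
  rw [klFun_apply]
  linear_combination h

lemma abs_sub_one_le_klFun {x t : ℝ} (hx : 0 ≤ x) (ht : 0 < t) :
    |x - 1| ≤ t * (x + 2) / 3 + klFun x / (2 * t) := by
  have hk := three_mul_sq_sub_one_le_mul_klFun hx
  rw [div_add_div _ _ (by norm_num) (by positivity), le_div_iff₀ (by positivity)]
  nlinarith [sq_nonneg (2 * t * (x + 2) - 3 * |x - 1|), sq_abs (x - 1)]

section KullbackLeibler

variable {X : Type*} [MeasurableSpace X] {μ ν : Measure X}

lemma klDiv_eq_informationTheory_klDiv [IsFiniteMeasure μ] [IsFiniteMeasure ν]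
    (h : μ univ = ν univ) : klDiv μ ν = InformationTheory.klDiv μ ν := by
  unfold klDiv
  split_ifs with hc
  · rw [InformationTheory.klDiv_of_ac_of_integrable hc.1 hc.2, measureReal_def, measureReal_def, h,
      add_sub_cancel_right, llr_def]
  · exact (InformationTheory.klDiv_eq_top_iff.2 fun hμν hint ↦ hc ⟨hμν, hint⟩).symm

lemma two_mul_measureReal_sub_le_integral_abs_rnDeriv_sub_one [IsFiniteMeasure μ]
    [IsFiniteMeasure ν] (hμν : μ ≪ ν) (h : μ univ = ν univ) {A : Set X} (hA : MeasurableSet A) :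
    2 * (μ.real A - ν.real A) ≤ ∫ x, |(μ.rnDeriv ν x).toReal - 1| ∂ν := by
  have hint : Integrable (fun x ↦ (μ.rnDeriv ν x).toReal - 1) ν :=
    Measure.integrable_toReal_rnDeriv.sub (integrable_const 1)
  have hset : ∀ s, ∫ x in s, ((μ.rnDeriv ν x).toReal - 1) ∂ν = μ.real s - ν.real s := fun s ↦ by
    rw [integral_sub Measure.integrable_toReal_rnDeriv.integrableOn
      (integrableOn_const (by finiteness)), Measure.setIntegral_toReal_rnDeriv hμν,
      setIntegral_const, smul_eq_mul, mul_one]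
  have hcompl : μ.real Aᶜ - ν.real Aᶜ = -(μ.real A - ν.real A) := by
    rw [measureReal_compl hA, measureReal_compl hA, measureReal_def, measureReal_def ν univ, h]
    ring
  calc 2 * (μ.real A - ν.real A)
      = ∫ x in A, ((μ.rnDeriv ν x).toReal - 1) ∂ν - ∫ x in Aᶜ, ((μ.rnDeriv ν x).toReal - 1) ∂ν := by
        rw [hset, hset, hcompl]; ring
    _ ≤ ∫ x in A, |(μ.rnDeriv ν x).toReal - 1| ∂ν + ∫ x in Aᶜ, |(μ.rnDeriv ν x).toReal - 1| ∂ν := by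
        rw [sub_eq_add_neg, ← integral_neg]
        gcongr ?_ + ?_
        · exact integral_mono hint.integrableOn hint.abs.integrableOn fun x ↦ le_abs_self _
        · exact integral_mono hint.neg.integrableOn hint.abs.integrableOn fun x ↦ neg_le_abs _
    _ = ∫ x, |(μ.rnDeriv ν x).toReal - 1| ∂ν := integral_add_compl hA hint.abs

variable [IsProbabilityMeasure μ] [IsProbabilityMeasure ν]

lemma integral_abs_rnDeriv_sub_one_le (h : InformationTheory.klDiv μ ν ≠ ∞) {t : ℝ} (ht : 0 < t) :
    ∫ x, |(μ.rnDeriv ν x).toReal - 1| ∂ν ≤ t + (InformationTheory.klDiv μ ν).toReal / (2 * t) := by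
  obtain ⟨hμν, hllr⟩ := InformationTheory.klDiv_ne_top_iff.1 h
  have hf : Integrable (fun x ↦ (μ.rnDeriv ν x).toReal) ν := Measure.integrable_toReal_rnDeriv
  have hkl := (InformationTheory.integrable_klFun_rnDeriv_iff hμν).2 hllr
  have hlin : Integrable (fun x ↦ t * ((μ.rnDeriv ν x).toReal + 2) / 3) ν := by fun_prop
  calc ∫ x, |(μ.rnDeriv ν x).toReal - 1| ∂ν
      ≤ ∫ x, (t * ((μ.rnDeriv ν x).toReal + 2) / 3 + klFun (μ.rnDeriv ν x).toReal / (2 * t)) ∂ν :=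
        integral_mono (hf.sub (integrable_const 1)).abs (hlin.add (hkl.div_const _))
          fun x ↦ abs_sub_one_le_klFun ENNReal.toReal_nonneg ht
    _ = t + (InformationTheory.klDiv μ ν).toReal / (2 * t) := by
        rw [integral_add hlin (hkl.div_const _), integral_div, integral_const_mul,
          integral_add hf (integrable_const 2), Measure.integral_toReal_rnDeriv hμν, integral_div,
          ← InformationTheory.toReal_klDiv_eq_integral_klFun hμν]
        simp only [probReal_univ, integral_const, smul_eq_mul, one_mul]
        ring

lemma measureReal_sub_le_sqrt_klDiv (h : InformationTheory.klDiv μ ν ≠ ∞) {A : Set X}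
    (hA : MeasurableSet A) :
    μ.real A - ν.real A ≤ √((InformationTheory.klDiv μ ν).toReal / 2) := by
  set δ := μ.real A - ν.real A
  rcases le_or_gt δ 0 with hδ | hδ
  · exact hδ.trans (sqrt_nonneg _)
  have h2δ : 2 * δ ≤ δ + (InformationTheory.klDiv μ ν).toReal / (2 * δ) :=
    (two_mul_measureReal_sub_le_integral_abs_rnDeriv_sub_one
      (InformationTheory.klDiv_ne_top_iff.1 h).1 (by simp) hA).trans
      (integral_abs_rnDeriv_sub_one_le h hδ)
  have hδD : δ * (2 * δ) ≤ (InformationTheory.klDiv μ ν).toReal := by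
    rw [← le_div_iff₀ (by positivity)]
    linarith
  rw [le_sqrt hδ.le (by positivity)]
  linarith

lemma measure_sub_le_klDiv_div_two_rpow {A : Set X} (hA : MeasurableSet A) :
    μ A - ν A ≤ (InformationTheory.klDiv μ ν / 2) ^ (1 / 2 : ℝ) := by
  by_cases h : InformationTheory.klDiv μ ν = ∞
  · simp [h, top_div_of_ne_top, top_rpow_of_pos]
  have hsqrt : (InformationTheory.klDiv μ ν / 2) ^ (1 / 2 : ℝ)
      = ENNReal.ofReal √((InformationTheory.klDiv μ ν).toReal / 2) := by
    rw [sqrt_eq_rpow, ← ofReal_rpow_of_nonneg (by positivity) (by norm_num),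
      ofReal_div_of_pos two_pos, ofReal_toReal h, ofReal_ofNat]
  rw [hsqrt, tsub_le_iff_right, ← ofReal_measureReal, ← ofReal_measureReal,
    ← ofReal_add (sqrt_nonneg _) measureReal_nonneg]
  exact ofReal_le_ofReal (by linarith [measureReal_sub_le_sqrt_klDiv h hA])

end KullbackLeibler

/-- Pinsker's inequality: TV(μ,ν) ≤ sqrt((1/2)·D_KL(μ‖ν)). -/
theorem pinsker {X : Type*} [MeasurableSpace X] (μ ν : Measure X)
    [IsProbabilityMeasure μ] [IsProbabilityMeasure ν] :
    tvDist μ ν ≤ (klDiv μ ν / 2) ^ (1/2 : ℝ) := by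
  rw [klDiv_eq_informationTheory_klDiv (by simp)]
  exact iSup₂_le fun A hA ↦ measure_sub_le_klDiv_div_two_rpow hA
end

section
/- For probability measures μ and ν, TV(μ, ν) ≤ sqrt(min((1/2)·D_KL(μ‖ν), 1 − exp(−D_KL(μ‖ν)))). -/
open MeasureTheory ENNReal
open scoped Classical

/-!
Write `g = dμ/dν` and `K = ∫ log g dμ`; it suffices to bound `d = μ A - ν A > 0` for measurable `A`.

Pinsker: Jensen for `t log t` on `A` and on `Aᶜ` bounds the binary divergence `kl(μ A, ν A)` by
`K`, and `kl(p, q) ≥ 2 (p - q)²` because `t ↦ kl(p, t) - 2 (p - t)²` is antitone on `(0, p]` and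
vanishes at `p`.

Bretagnolle–Huber: with `a = ∫ min(g, 1) dν` one has `d ≤ 1 - a` and `∫ max(g, 1) dν = 2 - a`.
Jensen for `exp` under `μ`, then Cauchy–Schwarz for `√g = √(min(g, 1) max(g, 1))`, give
`exp(-K/2) ≤ ∫ √g dν ≤ √(a (2 - a))`, hence `exp(-K) ≤ 1 - (1 - a)² ≤ 1 - d²`.
-/

open Set

noncomputable def bernoulliKL (p q : ℝ) : ℝ :=
  p * Real.log (p / q) + (1 - p) * Real.log ((1 - p) / (1 - q))

lemma mul_log_div_eq_sub {c t : ℝ} (ht : t ≠ 0) :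
    c * Real.log (c / t) = c * Real.log c - c * Real.log t := by
  rcases eq_or_ne c 0 with rfl | hc
  · simp
  · rw [Real.log_div hc ht, mul_sub]

lemma two_mul_sq_sub_le_bernoulliKL {p q : ℝ} (hq : 0 < q) (hqp : q ≤ p) (hp : p ≤ 1) :
    2 * (p - q) ^ 2 ≤ bernoulliKL p q := by
  rcases hqp.eq_or_lt with rfl | hqp
  · simp [bernoulliKL]
  -- `kl(p, t) - 2 (p - t)²` up to an additive constant
  set F : ℝ → ℝ := fun t ↦ -(p * Real.log t) - (1 - p) * Real.log (1 - t) - 2 * (p - t) ^ 2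
  have hF : ContinuousOn F (Icc q p) := by
    have hne : ∀ t ∈ Icc q p, t ≠ 0 := fun t ht ↦ (hq.trans_le ht.1).ne'
    rcases hp.eq_or_lt with rfl | hp
    · simp only [F, sub_self, zero_mul, sub_zero]
      fun_prop (disch := exact hne)
    · have hne' : ∀ t ∈ Icc q p, 1 - t ≠ 0 := fun t ht ↦ (sub_pos.2 (ht.2.trans_lt hp)).ne'
      fun_prop (disch := assumption)
  have hF' : ∀ t ∈ interior (Icc q p),
      HasDerivWithinAt F (-(p - t) * (2 * t - 1) ^ 2 / (t * (1 - t))) (interior (Icc q p)) t := by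
    rw [interior_Icc]
    rintro t ⟨hqt, htp⟩
    have ht : t ≠ 0 := by linarith
    have ht' : 1 - t ≠ 0 := by linarith
    exact (((((Real.hasDerivAt_log ht).const_mul p).neg.sub
      ((((hasDerivAt_id' t).const_sub 1).log ht').const_mul (1 - p))).sub
      ((((hasDerivAt_id' t).const_sub p).pow 2).const_mul 2)).congr_deriv
      (by field_simp; ring)).hasDerivWithinAt
  have hanti := antitoneOn_of_hasDerivWithinAt_nonpos (convex_Icc q p) hF hF' (by
    rw [interior_Icc]
    rintro t ⟨hqt, htp⟩
    have : 0 < 1 - t := by linarith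
    have : 0 < t := by linarith
    exact div_nonpos_of_nonpos_of_nonneg (by nlinarith [sq_nonneg (2 * t - 1)]) (by positivity))
  have := hanti (left_mem_Icc.2 hqp.le) (right_mem_Icc.2 hqp.le) hqp.le
  simp only [F, sub_self] at this
  rw [bernoulliKL, mul_log_div_eq_sub hq.ne', mul_log_div_eq_sub (by linarith)]
  linarith

lemma integral_sqrt_mul_le {α : Type*} [MeasurableSpace α] {μ : Measure α} {f g : α → ℝ}
    (hf : 0 ≤ f) (hg : 0 ≤ g) (hfi : Integrable f μ) (hgi : Integrable g μ) :
    ∫ x, Real.sqrt (f x * g x) ∂μ ≤ Real.sqrt (∫ x, f x ∂μ) * Real.sqrt (∫ x, g x ∂μ) := by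
  have hL2 : ∀ h : α → ℝ, 0 ≤ h → Integrable h μ →
      MemLp (fun x ↦ Real.sqrt (h x)) (ENNReal.ofReal 2) μ := fun h hh hhi ↦ by
    rw [ENNReal.ofReal_ofNat, memLp_two_iff_integrable_sq
      (Real.continuous_sqrt.comp_aestronglyMeasurable hhi.aestronglyMeasurable)]
    exact hhi.congr (ae_of_all _ fun x ↦ (Real.sq_sqrt (hh x)).symm)
  have := integral_mul_le_Lp_mul_Lq_of_nonneg Real.HolderConjugate.two_two
    (ae_of_all _ fun x ↦ Real.sqrt_nonneg (f x)) (ae_of_all _ fun x ↦ Real.sqrt_nonneg (g x))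
    (hL2 f hf hfi) (hL2 g hg hgi)
  rw [Real.sqrt_eq_rpow, Real.sqrt_eq_rpow]
  simpa only [Real.sqrt_mul (hf _), Real.rpow_two, Real.sq_sqrt (hf _), Real.sq_sqrt (hg _)]
    using this

lemma mul_exp_neg_log_div_two {t : ℝ} (ht : 0 ≤ t) :
    t * Real.exp (-Real.log t / 2) = Real.sqrt t := by
  rcases ht.eq_or_lt with rfl | ht
  · simp
  rw [Real.exp_half, Real.exp_neg, Real.exp_log ht, Real.sqrt_inv]
  nth_rw 1 [← Real.mul_self_sqrt ht.le]
  field_simp [(Real.sqrt_pos.2 ht).ne']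

section

variable {X : Type*} [MeasurableSpace X] {μ ν : Measure X}

lemma measureReal_mul_log_le_setIntegral_llr [IsFiniteMeasure μ] [IsFiniteMeasure ν]
    (hμν : μ ≪ ν) (hint : Integrable (llr μ ν) μ) (s : Set X) :
    μ.real s * Real.log (μ.real s / ν.real s) ≤ ∫ x in s, llr μ ν x ∂μ := by
  by_cases hνs : ν s = 0
  · simp [Measure.real, hμν hνs, Measure.restrict_eq_zero.2 (hμν hνs)]
  have hνs' : 0 < ν.real s := ENNReal.toReal_pos hνs (measure_ne_top ν s)
  have hJ := Real.convexOn_mul_log.map_set_average_le Real.continuous_mul_log.continuousOn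
    isClosed_Ici hνs (measure_ne_top ν s) (ae_of_all _ fun x ↦ ENNReal.toReal_nonneg)
    Measure.integrable_toReal_rnDeriv.integrableOn
    ((integrable_toReal_rnDeriv_mul_iff hμν).2 hint).integrableOn
  simp only [setAverage_eq, smul_eq_mul, Measure.setIntegral_toReal_rnDeriv hμν s] at hJ
  rw [← setIntegral_toReal_rnDeriv_mul' hμν, div_eq_inv_mul]
  calc μ.real s * Real.log ((ν.real s)⁻¹ * μ.real s)
      = ν.real s * ((ν.real s)⁻¹ * μ.real s * Real.log ((ν.real s)⁻¹ * μ.real s)) := by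
        field_simp
    _ ≤ ν.real s * ((ν.real s)⁻¹ * ∫ x in s, (μ.rnDeriv ν x).toReal *
          Real.log (μ.rnDeriv ν x).toReal ∂ν) := by gcongr
    _ = _ := by field_simp; rfl

lemma integral_llr_nonneg [IsProbabilityMeasure μ] [IsProbabilityMeasure ν]
    (hμν : μ ≪ ν) (hint : Integrable (llr μ ν) μ) : 0 ≤ ∫ x, llr μ ν x ∂μ := by
  simpa using InformationTheory.integral_llr_add_sub_measure_univ_nonneg hμν hint

lemma bernoulliKL_le_integral_llr [IsProbabilityMeasure μ] [IsProbabilityMeasure ν]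
    (hμν : μ ≪ ν) (hint : Integrable (llr μ ν) μ) {A : Set X} (hA : MeasurableSet A) :
    bernoulliKL (μ.real A) (ν.real A) ≤ ∫ x, llr μ ν x ∂μ := by
  rw [bernoulliKL, ← integral_add_compl hA hint, ← probReal_compl_eq_one_sub hA,
    ← probReal_compl_eq_one_sub hA]
  exact add_le_add (measureReal_mul_log_le_setIntegral_llr hμν hint A)
    (measureReal_mul_log_le_setIntegral_llr hμν hint Aᶜ)

lemma two_mul_sq_measureReal_sub_le_integral_llr
    [IsProbabilityMeasure μ] [IsProbabilityMeasure ν] (hμν : μ ≪ ν)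
    (hint : Integrable (llr μ ν) μ) {A : Set X} (hA : MeasurableSet A)
    (hνμ : ν.real A ≤ μ.real A) :
    2 * (μ.real A - ν.real A) ^ 2 ≤ ∫ x, llr μ ν x ∂μ := by
  rcases eq_or_ne (ν A) 0 with hν | hν
  · simpa [Measure.real, hν, hμν hν] using integral_llr_nonneg hμν hint
  · have hq : 0 < ν.real A := ENNReal.toReal_pos hν (measure_ne_top ν A)
    exact (two_mul_sq_sub_le_bernoulliKL hq hνμ measureReal_le_one).trans
      (bernoulliKL_le_integral_llr hμν hint hA)

lemma exp_neg_half_integral_llr_le [IsProbabilityMeasure μ] [IsFiniteMeasure ν]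
    (hμν : μ ≪ ν) (hint : Integrable (llr μ ν) μ) :
    Real.exp (-(∫ x, llr μ ν x ∂μ) / 2) ≤ ∫ x, Real.sqrt (μ.rnDeriv ν x).toReal ∂ν := by
  have hsqrt : (fun x ↦ (μ.rnDeriv ν x).toReal * Real.exp (-llr μ ν x / 2))
      = fun x ↦ Real.sqrt (μ.rnDeriv ν x).toReal :=
    funext fun x ↦ mul_exp_neg_log_div_two ENNReal.toReal_nonneg
  have hsqrt_int : Integrable (fun x ↦ Real.sqrt (μ.rnDeriv ν x).toReal) ν := by
    refine ((integrable_const (1 : ℝ)).add (Measure.integrable_toReal_rnDeriv (μ := μ))).mono'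
      (Measure.measurable_rnDeriv μ ν).ennreal_toReal.sqrt.aestronglyMeasurable
      (ae_of_all _ fun x ↦ ?_)
    rw [Real.norm_of_nonneg (Real.sqrt_nonneg _)]
    have ht : 0 ≤ (μ.rnDeriv ν x).toReal := ENNReal.toReal_nonneg
    show _ ≤ 1 + (μ.rnDeriv ν x).toReal
    nlinarith [Real.sq_sqrt ht, Real.sqrt_nonneg (μ.rnDeriv ν x).toReal]
  rw [← hsqrt, integrable_toReal_rnDeriv_mul_iff hμν] at hsqrt_int
  rw [← hsqrt, integral_toReal_rnDeriv_mul hμν, ← integral_neg, ← integral_div]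
  exact convexOn_exp.map_integral_le (f := fun x ↦ -llr μ ν x / 2)
    Real.continuous_exp.continuousOn isClosed_univ (ae_of_all _ fun _ ↦ mem_univ _)
    (hint.neg.div_const 2) hsqrt_int

lemma measureReal_sub_le_one_sub_integral_min [IsProbabilityMeasure μ] [IsFiniteMeasure ν]
    (hμν : μ ≪ ν) (A : Set X) :
    μ.real A - ν.real A ≤ 1 - ∫ x, min (μ.rnDeriv ν x).toReal 1 ∂ν := by
  set g : X → ℝ := fun x ↦ (μ.rnDeriv ν x).toReal
  have hgi : Integrable g ν := Measure.integrable_toReal_rnDeriv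
  have hmin : Integrable (fun x ↦ min (g x) 1) ν := hgi.inf (integrable_const 1)
  have hexcess : Integrable (fun x ↦ g x - min (g x) 1) ν := hgi.sub hmin
  calc μ.real A - ν.real A = ∫ x in A, (g x - 1) ∂ν := by
        rw [integral_sub hgi.integrableOn (integrable_const 1).integrableOn,
          Measure.setIntegral_toReal_rnDeriv hμν, setIntegral_const, smul_eq_mul, mul_one]
    _ ≤ ∫ x in A, (g x - min (g x) 1) ∂ν :=
        setIntegral_mono (hgi.sub (integrable_const 1)).integrableOn hexcess.integrableOn
          fun x ↦ sub_le_sub_left (min_le_right _ _) _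
    _ ≤ ∫ x, (g x - min (g x) 1) ∂ν :=
        setIntegral_le_integral hexcess (ae_of_all _ fun x ↦ sub_nonneg.2 (min_le_left _ _))
    _ = 1 - ∫ x, min (g x) 1 ∂ν := by
        rw [integral_sub hgi hmin, Measure.integral_toReal_rnDeriv hμν, probReal_univ]

lemma sq_measureReal_sub_le_one_sub_exp [IsProbabilityMeasure μ] [IsProbabilityMeasure ν]
    (hμν : μ ≪ ν) (hint : Integrable (llr μ ν) μ) {A : Set X}
    (hνμ : ν.real A ≤ μ.real A) :
    (μ.real A - ν.real A) ^ 2 ≤ 1 - Real.exp (-∫ x, llr μ ν x ∂μ) := by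
  set g : X → ℝ := fun x ↦ (μ.rnDeriv ν x).toReal
  have hg : 0 ≤ g := fun x ↦ ENNReal.toReal_nonneg
  have hgi : Integrable g ν := Measure.integrable_toReal_rnDeriv
  have hmin : Integrable (fun x ↦ min (g x) 1) ν := hgi.inf (integrable_const 1)
  have hmax : Integrable (fun x ↦ max (g x) 1) ν := hgi.sup (integrable_const 1)
  set a := ∫ x, min (g x) 1 ∂ν
  have ha : 0 ≤ a := integral_nonneg fun x ↦ le_min (hg x) zero_le_one
  have hmax_eq : ∫ x, max (g x) 1 ∂ν = 2 - a := by
    have h := integral_add hmin hmax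
    simp only [min_add_max] at h
    rw [integral_add hgi (integrable_const 1), Measure.integral_toReal_rnDeriv hμν] at h
    simp only [integral_const, probReal_univ, smul_eq_mul, mul_one] at h
    linarith
  have h2a : 0 ≤ 2 - a := hmax_eq ▸ integral_nonneg fun x ↦ le_max_of_le_right zero_le_one
  have hCS : ∫ x, Real.sqrt (g x) ∂ν ≤ Real.sqrt a * Real.sqrt (2 - a) := by
    simpa only [min_mul_max, mul_one, hmax_eq] using integral_sqrt_mul_le
      (fun x ↦ le_min (hg x) zero_le_one) (fun x ↦ le_max_of_le_right zero_le_one) hmin hmax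
  have hexp : Real.exp (-∫ x, llr μ ν x ∂μ) ≤ a * (2 - a) := by
    calc Real.exp (-∫ x, llr μ ν x ∂μ) = Real.exp (-(∫ x, llr μ ν x ∂μ) / 2) ^ 2 := by
          rw [← Real.exp_nat_mul]; ring_nf
      _ ≤ (∫ x, Real.sqrt (g x) ∂ν) ^ 2 := by
          gcongr; exact exp_neg_half_integral_llr_le hμν hint
      _ ≤ (Real.sqrt a * Real.sqrt (2 - a)) ^ 2 := by
          gcongr
      _ = a * (2 - a) := by rw [mul_pow, Real.sq_sqrt ha, Real.sq_sqrt h2a]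
  have hd := measureReal_sub_le_one_sub_integral_min hμν A
  nlinarith

lemma tvDist_le_one [IsProbabilityMeasure μ] : tvDist μ ν ≤ 1 :=
  iSup₂_le fun _ _ ↦ tsub_le_self.trans prob_le_one

lemma tvDist_le_ofReal [IsFiniteMeasure μ] [IsFiniteMeasure ν] {t : ℝ}
    (h : ∀ A, MeasurableSet A → μ.real A - ν.real A ≤ t) : tvDist μ ν ≤ ENNReal.ofReal t := by
  refine iSup₂_le fun A hA ↦ ?_
  rw [← ofReal_measureReal, ← ofReal_measureReal, ← ENNReal.ofReal_sub _ measureReal_nonneg]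
  exact ENNReal.ofReal_le_ofReal (h A hA)

lemma klDiv_eq_ofReal (hμν : μ ≪ ν) (hint : Integrable (llr μ ν) μ) :
    klDiv μ ν = ENNReal.ofReal (∫ x, llr μ ν x ∂μ) :=
  if_pos ⟨hμν, hint⟩

lemma klDiv_eq_top (h : ¬(μ ≪ ν ∧ Integrable (llr μ ν) μ)) : klDiv μ ν = ⊤ :=
  if_neg h

lemma expNeg_ofReal {D : ℝ} (hD : 0 ≤ D) :
    expNeg (ENNReal.ofReal D) = ENNReal.ofReal (Real.exp (-D)) := by
  rw [expNeg, if_neg ofReal_ne_top, toReal_ofReal hD]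

lemma min_half_one_sub_expNeg_ofReal {D : ℝ} (hD : 0 ≤ D) :
    min (ENNReal.ofReal D / 2) (1 - expNeg (ENNReal.ofReal D))
      = ENNReal.ofReal (min (D / 2) (1 - Real.exp (-D))) := by
  rw [expNeg_ofReal hD, ENNReal.ofReal_min, ENNReal.ofReal_div_of_pos two_pos, ofReal_ofNat,
    ENNReal.ofReal_sub _ (Real.exp_pos _).le, ofReal_one]

end

/-- Combined Pinsker and Bretagnolle–Huber inequalities. -/
theorem pinsker_BH {X : Type*} [MeasurableSpace X] (μ ν : Measure X)
    [IsProbabilityMeasure μ] [IsProbabilityMeasure ν] :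
    tvDist μ ν ≤ (min (klDiv μ ν / 2) (1 - expNeg (klDiv μ ν))) ^ (1/2 : ℝ) := by
  by_cases h : μ ≪ ν ∧ Integrable (llr μ ν) μ
  swap
  · rw [klDiv_eq_top h, expNeg, if_pos rfl, top_div_of_ne_top ofNat_ne_top, tsub_zero,
      min_eq_right le_top, one_rpow]
    exact tvDist_le_one
  obtain ⟨hμν, hint⟩ := h
  rw [klDiv_eq_ofReal hμν hint]
  set K := ∫ x, llr μ ν x ∂μ
  have hK : 0 ≤ K := integral_llr_nonneg hμν hint
  have hm : 0 ≤ min (K / 2) (1 - Real.exp (-K)) :=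
    le_min (div_nonneg hK zero_le_two) (sub_nonneg.2 (Real.exp_le_one_iff.2 (neg_nonpos.2 hK)))
  rw [min_half_one_sub_expNeg_ofReal hK, ENNReal.ofReal_rpow_of_nonneg hm one_half_pos.le,
    ← Real.sqrt_eq_rpow]
  refine tvDist_le_ofReal fun A hA ↦ ?_
  rcases le_or_gt (μ.real A) (ν.real A) with hle | hlt
  · exact (sub_nonpos.2 hle).trans (Real.sqrt_nonneg _)
  refine Real.le_sqrt_of_sq_le (le_min ?_ ?_)
  · rw [le_div_iff₀ two_pos, mul_comm]
    exact two_mul_sq_measureReal_sub_le_integral_llr hμν hint hA hlt.le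
  · exact sq_measureReal_sub_le_one_sub_exp hμν hint hlt.le
end

section
/- Let f be a measurable function and μ, ν probability measures. Then the KL divergence satisfies D_KL(f_#μ ‖ f_#ν) ≤ D_KL(μ ‖ ν). -/
open MeasureTheory ENNReal
open scoped Classical

/-- Mathlib's divergence carries the correction term `ν.real univ - μ.real univ`, which vanishes
for measures of equal total mass. -/
theorem klDiv_eq_informationTheory_klDiv_s6 {X : Type*} [MeasurableSpace X] {μ ν : Measure X}
    (h : μ Set.univ = ν Set.univ) : klDiv μ ν = InformationTheory.klDiv μ ν := by
  have h_real : ν.real Set.univ - μ.real Set.univ = 0 := by simp [measureReal_def, h]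
  rw [klDiv, InformationTheory.klDiv_def, add_sub_assoc, h_real, add_zero]
  rfl

/-- Data processing inequality for KL divergence. -/
theorem klDiv_data_processing {X Y : Type*} [MeasurableSpace X] [MeasurableSpace Y]
    (f : X → Y) (hf : Measurable f) (μ ν : Measure X)
    [IsProbabilityMeasure μ] [IsProbabilityMeasure ν] :
    klDiv (μ.map f) (ν.map f) ≤ klDiv μ ν := by
  rw [klDiv_eq_informationTheory_klDiv_s6 (by simp [Measure.map_apply hf MeasurableSet.univ]),
    klDiv_eq_informationTheory_klDiv_s6 (by simp)]
  exact InformationTheory.klDiv_map_le μ ν hf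
end
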